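/- arXiv:0707.0129 — 4 statements merged into one kernel-verified Lean document; each statement's English description precedes it below -/
import Mathlib

section
/- For every element m of the R-submodule of K generated by { x_V : V ∈ 𝒱 }, one has m = i_S(m)·x_S + Σ_{V ∈ 𝒱, V < S} ( i_V(m) − i_S(m)·i_V(x_S) )·ĥ(V). (This is the abstract algebraic form of the paper's main Theorem 3.1: for [M] in the K₀(MHM(pt))-submodule of K₀(D^bMHM(Y)) generated by the classes [IC'^H_{V̄}], one has [M] = [IC'^H_Y]·i_s^*[M] + Σ_{V<S} ÎC^H(V̄)·( i_v^*[M] − i_s^*[M]·i_v^*[IC'^H_Y] ).) -/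
/-- Abstract algebraic form of the main Theorem 3.1: for `m` in the `R`-submodule of `K`
generated by the classes `x V`, one has
`m = i S m • x S + ∑_{V < S} (i V m - i S m * i V (x S)) • ĥ V`,
where `S = ⊤` is the greatest element and `ĥ` is defined by the inductive recurrence
`ĥ V = x V - ∑_{W < V} i W (x V) • ĥ W`. -/
theorem stmt_0 {R K V : Type*} [CommRing R] [AddCommGroup K] [Module R K]
    [Fintype V] [PartialOrder V] [OrderTop V]
    [DecidableRel ((· < ·) : V → V → Prop)]
    (x : V → K) (i : V → K →ₗ[R] R)
    (h_diag : ∀ v, i v (x v) = 1)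
    (h_vanish : ∀ v w, ¬ w ≤ v → i w (x v) = 0)
    (hhat : V → K)
    (hhat_rec : ∀ v, hhat v =
      x v - ∑ w ∈ Finset.univ.filter (fun w => w < v), i w (x v) • hhat w)
    (m : K) (hm : m ∈ Submodule.span R (Set.range x)) :
    m = i ⊤ m • x ⊤ +
      ∑ v ∈ Finset.univ.filter (fun v => v < (⊤ : V)),
        (i v m - i ⊤ m * i v (x ⊤)) • hhat v := by
  classical
  -- main lemma: every element of the span is the sum of its "coefficients" times hhat
  have key : ∀ m ∈ Submodule.span R (Set.range x), m = ∑ v, i v m • hhat v := by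
    intro m hm
    induction hm using Submodule.span_induction with
    | mem p hp =>
      obtain ⟨u, rfl⟩ := hp
      have hsplit := Finset.sum_filter_add_sum_filter_not Finset.univ
        (fun v => v ≤ u) (fun v => i v (x u) • hhat v)
      have hzero : ∑ v ∈ Finset.univ.filter (fun v => ¬ v ≤ u),
          i v (x u) • hhat v = 0 := by
        refine Finset.sum_eq_zero fun v hv => ?_
        rw [h_vanish u v (Finset.mem_filter.mp hv).2, zero_smul]
      have hins : Finset.univ.filter (fun v => v ≤ u) =
          insert u (Finset.univ.filter (fun v => v < u)) := by
        ext w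
        simp [Finset.mem_filter, Finset.mem_insert, le_iff_lt_or_eq, or_comm]
      have hnotmem : u ∉ Finset.univ.filter (fun v => v < u) := by
        simp
      rw [← hsplit, hzero, add_zero, hins, Finset.sum_insert hnotmem, h_diag, one_smul,
        hhat_rec u]
      abel
    | zero => simp
    | add p q hp hq ihp ihq =>
      simp only [map_add]
      conv_lhs => rw [ihp, ihq]
      rw [← Finset.sum_add_distrib]
      refine Finset.sum_congr rfl fun v _ => ?_
      rw [add_smul]
    | smul r p hp ih =>
      conv_lhs => rw [ih]
      rw [Finset.smul_sum]
      refine Finset.sum_congr rfl fun v _ => ?_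
      rw [map_smul, smul_smul, smul_eq_mul]
  have hm' := key m hm
  have hx := key (x ⊤) (Submodule.subset_span ⟨⊤, rfl⟩)
  -- split the universe sum at ⊤
  have hfilt : Finset.univ.filter (fun v => v < (⊤ : V)) =
      Finset.univ.erase (⊤ : V) := by
    ext w; simp [lt_top_iff_ne_top]
  have hsum : ∀ f : V → K, ∑ v, f v = f ⊤ +
      ∑ v ∈ Finset.univ.filter (fun v => v < (⊤ : V)), f v := by
    intro f
    rw [hfilt, Finset.add_sum_erase _ f (Finset.mem_univ _)]
  calc m = ∑ v, i v m • hhat v := hm'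
    _ = i ⊤ m • hhat ⊤ +
        ∑ v ∈ Finset.univ.filter (fun v => v < (⊤ : V)), i v m • hhat v :=
      hsum _
    _ = i ⊤ m • x ⊤ +
        ∑ v ∈ Finset.univ.filter (fun v => v < (⊤ : V)),
          (i v m - i ⊤ m * i v (x ⊤)) • hhat v := by
      rw [hhat_rec ⊤, smul_sub, Finset.smul_sum, sub_add_eq_add_sub,
        add_sub_assoc, ← Finset.sum_sub_distrib]
      congr 1
      refine Finset.sum_congr rfl fun v _ => ?_
      rw [sub_smul, smul_smul]
end

section
/- Define χ̂ : 𝒱 → A inductively by χ̂(V) = p(x_V) − Σ_{W < V} χ̂(W)·φ(i_W(x_V)). Then χ̂(V) = p(ĥ(V)) for every V ∈ 𝒱, and for every m in the R-submodule of K generated by { x_V : V ∈ 𝒱 } one has p(m) = p(x_S)·φ(i_S(m)) + Σ_{V < S} χ̂(V)·( φ(i_V(m)) − φ(i_S(m))·φ(i_V(x_S)) ). (This is the abstract form of the stratified multiplicative property for χ_y-genera, Theorem 2.5 / Proposition 3.3: χ_y(X) = Iχ_y(Y)·χ_y(F) + Σ_{V<S} Îχ_y(V̄)·( χ_y(F_V)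 − χ_y(F)·Iχ_y(c°L_{V,Y}) ) for a proper algebraic map f : X → Y with simply connected strata.) -/
/-- Abstract form of the stratified multiplicative property for `χ_y`-genera
(Theorem 2.5 / Proposition 3.3): with `χ̂ V = p (x V) - ∑_{W < V} χ̂ W * φ (i W (x V))`
defined inductively, one has `χ̂ V = p (ĥ V)` for all `V`, and for every `m` in the
`R`-submodule generated by the `x V`:
`p m = p (x S) * φ (i S m) + ∑_{V < S} χ̂ V * (φ (i V m) - φ (i S m) * φ (i V (x S)))`. -/
theorem stmt_2 {R K V A : Type*} [CommRing R] [AddCommGroup K] [Module R K]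
    [Fintype V] [PartialOrder V] [OrderTop V]
    [DecidableRel ((· < ·) : V → V → Prop)]
    [CommRing A]
    (x : V → K) (i : V → K →ₗ[R] R)
    (h_diag : ∀ v, i v (x v) = 1)
    (h_vanish : ∀ v w, ¬ w ≤ v → i w (x v) = 0)
    (φ : R →+* A) (p : K →+ A)
    (hp : ∀ (r : R) (m : K), p (r • m) = p m * φ r)
    (hhat : V → K)
    (hhat_rec : ∀ v, hhat v =
      x v - ∑ w ∈ Finset.univ.filter (fun w => w < v), i w (x v) • hhat w)
    (χhat : V → A)
    (χhat_rec : ∀ v, χhat v =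
      p (x v) - ∑ w ∈ Finset.univ.filter (fun w => w < v), χhat w * φ (i w (x v))) :
    (∀ v, χhat v = p (hhat v)) ∧
    ∀ m ∈ Submodule.span R (Set.range x),
      p m = p (x ⊤) * φ (i ⊤ m) +
        ∑ v ∈ Finset.univ.filter (fun v => v < (⊤ : V)),
          χhat v * (φ (i v m) - φ (i ⊤ m) * φ (i v (x ⊤))) := by

  classical
  have part1 : ∀ v, χhat v = p (hhat v) := by
    intro v
    induction v using WellFoundedLT.induction with
    | _ v IH =>
      rw [χhat_rec v, hhat_rec v, map_sub, map_sum]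
      congr 1
      refine Finset.sum_congr rfl fun w hw => ?_
      rw [hp, IH w (Finset.mem_filter.mp hw).2]
  refine ⟨part1, ?_⟩
  have key : ∀ u : V, p (x u) = p (x ⊤) * φ (i ⊤ (x u)) +
      ∑ v ∈ Finset.univ.filter (fun v => v < (⊤ : V)),
        χhat v * (φ (i v (x u)) - φ (i ⊤ (x u)) * φ (i v (x ⊤))) := by
    intro u
    by_cases hu : u = ⊤
    · subst hu
      rw [h_diag ⊤, map_one, mul_one]
      have : ∀ v ∈ Finset.univ.filter (fun v => v < (⊤ : V)),
          χhat v * (φ (i v (x ⊤)) - 1 * φ (i v (x ⊤))) = 0 := by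
        intro v _; rw [one_mul, sub_self, mul_zero]
      rw [Finset.sum_congr rfl this, Finset.sum_const_zero, add_zero]
    · have htop : i ⊤ (x u) = 0 := h_vanish u ⊤ (fun h => hu (top_le_iff.mp h))
      rw [htop, map_zero, mul_zero, zero_add]
      have hlt : u < ⊤ := lt_top_iff_ne_top.mpr hu
      have hsum : ∑ v ∈ Finset.univ.filter (fun v => v < (⊤ : V)),
          χhat v * (φ (i v (x u)) - 0 * φ (i v (x ⊤)))
          = ∑ v ∈ Finset.univ.filter (fun v => v ≤ u), χhat v * φ (i v (x u)) := by
        simp only [zero_mul, sub_zero]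
        refine (Finset.sum_subset ?_ ?_).symm
        · intro v hv
          simp only [Finset.mem_filter, Finset.mem_univ, true_and] at hv ⊢
          exact lt_of_le_of_lt hv hlt
        · intro v hv hv2
          simp only [Finset.mem_filter, Finset.mem_univ, true_and] at hv hv2
          rw [h_vanish u v hv2, map_zero, mul_zero]
      rw [hsum]
      have hsplit : Finset.univ.filter (fun v => v ≤ u)
          = insert u (Finset.univ.filter (fun v => v < u)) := by
        ext v
        simp only [Finset.mem_filter, Finset.mem_univ, true_and, Finset.mem_insert]
        constructor
        · intro h; rcases eq_or_lt_of_le h with h | h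
          · exact Or.inl h
          · exact Or.inr h
        · rintro (rfl | h)
          · exact le_rfl
          · exact h.le
      rw [hsplit, Finset.sum_insert (by simp), h_diag u, map_one, mul_one,
        χhat_rec u]
      ring
  intro m hm
  induction hm using Submodule.span_induction with
  | mem m hmem =>
    obtain ⟨u, rfl⟩ := hmem
    exact key u
  | zero => simp
  | add m n hm hn ihm ihn =>
    simp only [map_add]
    rw [ihm, ihn]
    have hb : ∀ v ∈ Finset.univ.filter (fun v => v < (⊤ : V)),
        χhat v * (φ (i v m) + φ (i v n) - (φ (i ⊤ m) + φ (i ⊤ n)) * φ (i v (x ⊤)))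
        = χhat v * (φ (i v m) - φ (i ⊤ m) * φ (i v (x ⊤)))
          + χhat v * (φ (i v n) - φ (i ⊤ n) * φ (i v (x ⊤))) := fun v _ => by ring
    rw [Finset.sum_congr rfl hb, Finset.sum_add_distrib]
    ring
  | smul r m hm ihm =>
    simp only [map_smul, hp, smul_eq_mul, map_mul]
    have hb : ∀ v ∈ Finset.univ.filter (fun v => v < (⊤ : V)),
        χhat v * (φ r * φ (i v m) - φ r * φ (i ⊤ m) * φ (i v (x ⊤)))
        = χhat v * (φ (i v m) - φ (i ⊤ m) * φ (i v (x ⊤))) * φ r := fun v _ => by ring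
    rw [Finset.sum_congr rfl hb, ← Finset.sum_mul, ihm]
    ring
end

section
/- Define T̂ : 𝒱 → H inductively by T̂(V) = T(x_V) − Σ_{W < V} φ(i_W(x_V))·T̂(W). Then for every m in the R-submodule of K generated by { x_V : V ∈ 𝒱 } one has T(m) = φ(i_S(m))·T(x_S) + Σ_{V < S} ( φ(i_V(m)) − φ(i_S(m))·φ(i_V(x_S)) )·T̂(V). (This is the abstract form of the stratified multiplicative property for Hirzebruch classes, Theorem 4.7: f_* T_{y*}(X) = IT_{y*}(Y)·χ_y(F) + Σ_{V<S} ÎT_{y*}(V̄)·( χ_y(F_V) − χ_y(F)·Iχ_y(c°L_{V,Y}) ) for a proper algebraic map f : X → Y with simply connected strata.) -/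
/-- Abstract form of the stratified multiplicative property for Hirzebruch classes
(Theorem 4.7): with `T̂ V = T (x V) - ∑_{W < V} φ (i W (x V)) • T̂ W` defined inductively,
for every `m` in the `R`-submodule generated by the `x V`:
`T m = φ (i S m) • T (x S) + ∑_{V < S} (φ (i V m) - φ (i S m) * φ (i V (x S))) • T̂ V`. -/
theorem stmt_3 {R K V A H : Type*} [CommRing R] [AddCommGroup K] [Module R K]
    [Fintype V] [PartialOrder V] [OrderTop V]
    [DecidableRel ((· < ·) : V → V → Prop)]
    [CommRing A] [AddCommGroup H] [Module A H]
    (x : V → K) (i : V → K →ₗ[R] R)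
    (h_diag : ∀ v, i v (x v) = 1)
    (h_vanish : ∀ v w, ¬ w ≤ v → i w (x v) = 0)
    (φ : R →+* A) (T : K →+ H)
    (hT : ∀ (r : R) (m : K), T (r • m) = φ r • T m)
    (That : V → H)
    (That_rec : ∀ v, That v =
      T (x v) - ∑ w ∈ Finset.univ.filter (fun w => w < v), φ (i w (x v)) • That w) :
    ∀ m ∈ Submodule.span R (Set.range x),
      T m = φ (i ⊤ m) • T (x ⊤) +
        ∑ v ∈ Finset.univ.filter (fun v => v < (⊤ : V)),
          (φ (i v m) - φ (i ⊤ m) * φ (i v (x ⊤))) • That v := by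

  classical
  have hTsum : ∀ v, T (x v) = ∑ w, φ (i w (x v)) • That w := by
    intro v
    rw [← Finset.sum_filter_add_sum_filter_not Finset.univ (fun w => w ≤ v)]
    have h2 : ∑ w ∈ Finset.univ.filter (fun w => ¬ w ≤ v), φ (i w (x v)) • That w = 0 := by
      apply Finset.sum_eq_zero
      intro w hw
      rw [Finset.mem_filter] at hw
      rw [h_vanish v w hw.2, map_zero, zero_smul]
    rw [h2, add_zero]
    have h3 : Finset.univ.filter (fun w => w ≤ v) =
        insert v (Finset.univ.filter (fun w => w < v)) := by
      ext w
      simp [le_iff_lt_or_eq, or_comm]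
    rw [h3, Finset.sum_insert (by simp), h_diag, map_one, one_smul, That_rec v]
    abel
  have main : ∀ m ∈ Submodule.span R (Set.range x),
      T m = ∑ w, φ (i w m) • That w := by
    intro m hm
    induction hm using Submodule.span_induction with
    | mem m hm => obtain ⟨v, rfl⟩ := hm; exact hTsum v
    | zero => simp
    | add a b _ _ ha hb => simp [ha, hb, Finset.sum_add_distrib, add_smul]
    | smul r a _ ha =>
        simp [hT, ha, Finset.smul_sum, smul_smul]
  intro m hm
  have hsplit : ∀ f : V → H, ∑ w, f w =
      f ⊤ + ∑ w ∈ Finset.univ.filter (fun w => w < (⊤ : V)), f w := by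
    intro f
    have h4 : Finset.univ.filter (fun w => w < (⊤ : V)) = Finset.univ.erase ⊤ := by
      ext w; simp [lt_top_iff_ne_top]
    rw [h4, Finset.add_sum_erase _ f (Finset.mem_univ ⊤)]
  rw [main m hm, hTsum ⊤,
    hsplit (fun w => φ (i w m) • That w), hsplit (fun w => φ (i w (x ⊤)) • That w)]
  simp only [h_diag, map_one, one_smul, smul_add, Finset.smul_sum, smul_smul]
  rw [add_assoc, ← Finset.sum_add_distrib]
  congr 1
  apply Finset.sum_congr rfl
  intro w _
  rw [← add_smul]
  ring_nf
end

section
/- If m lies in the R-submodule of K generated by { x_V : V ∈ 𝒱 } and i_V(m) = 1 for every V ∈ 𝒱, then m = x_S + Σ_{V < S} (1 − i_V(x_S))·ĥ(V). (This is the abstract form of the relation between the χ_y- and Iχ_y-genus of an irreducible variety, obtained from the main theorem with f = id and M = ℚ^H_Y, using i_v^*[ℚ^H_Y] = 1: χ_y(Y) = Iχ_y(Y) + Σ_{V<S} Îχ_y(V̄)·( 1 − Iχ_y(c°L_{V,Y}) ).) -/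
/-- Abstract form of the relation between the `χ_y`- and `Iχ_y`-genus of an irreducible
variety: if `m` lies in the `R`-submodule generated by the `x V` and `i V m = 1` for every
`V`, then `m = x S + ∑_{V < S} (1 - i V (x S)) • ĥ V`. -/
theorem stmt_4 {R K V : Type*} [CommRing R] [AddCommGroup K] [Module R K]
    [Fintype V] [PartialOrder V] [OrderTop V]
    [DecidableRel ((· < ·) : V → V → Prop)]
    (x : V → K) (i : V → K →ₗ[R] R)
    (h_diag : ∀ v, i v (x v) = 1)
    (h_vanish : ∀ v w, ¬ w ≤ v → i w (x v) = 0)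
    (hhat : V → K)
    (hhat_rec : ∀ v, hhat v =
      x v - ∑ w ∈ Finset.univ.filter (fun w => w < v), i w (x v) • hhat w)
    (m : K) (hm : m ∈ Submodule.span R (Set.range x))
    (hone : ∀ v, i v m = 1) :
    m = x ⊤ +
      ∑ v ∈ Finset.univ.filter (fun v => v < (⊤ : V)),
        (1 - i v (x ⊤)) • hhat v := by
  classical
  -- Key: i w (hhat v) = δ_{w v}
  have key : ∀ v w, i w (hhat v) = if w = v then 1 else 0 := by
    intro v
    induction v using WellFoundedLT.induction with
    | _ v IH =>
      intro w
      have hsum : ∑ u ∈ Finset.univ.filter (fun u => u < v),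
          (i w) ((i u) (x v) • hhat u) = if w < v then i w (x v) else 0 := by
        have h1 : ∀ u ∈ Finset.univ.filter (fun u => u < v),
            (i w) ((i u) (x v) • hhat u) = if u = w then i w (x v) else 0 := by
          intro u hu
          have hu' : u < v := (Finset.mem_filter.mp hu).2
          rw [map_smul, IH u hu' w, smul_eq_mul]
          by_cases h : w = u
          · subst h; simp
          · simp [h, Ne.symm h]
        rw [Finset.sum_congr rfl h1, Finset.sum_ite_eq' _ w (fun _ => i w (x v))]
        simp
      rw [hhat_rec v, map_sub, map_sum, hsum]
      by_cases hwv : w = v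
      · subst hwv
        simp [h_diag w, lt_irrefl]
      · simp only [if_neg hwv]
        by_cases hlt : w < v
        · simp [hlt]
        · have : ¬ w ≤ v := fun h => hlt (lt_of_le_of_ne h hwv)
          simp [hlt, h_vanish v w this]
  -- each x v lies in the span of the hhat's
  have hx : ∀ v, x v ∈ Submodule.span R (Set.range hhat) := by
    intro v
    have hv : x v = hhat v +
        ∑ w ∈ Finset.univ.filter (fun w => w < v), i w (x v) • hhat w := by
      rw [hhat_rec v]; abel
    rw [hv]
    exact Submodule.add_mem _ (Submodule.subset_span ⟨v, rfl⟩)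
      (Submodule.sum_mem _ fun w _ =>
        Submodule.smul_mem _ _ (Submodule.subset_span ⟨w, rfl⟩))
  have hm' : m ∈ Submodule.span R (Set.range hhat) :=
    Submodule.span_le.mpr (Set.range_subset_iff.mpr hx) hm
  -- representation: any element of the span equals ∑ v, (i v z) • hhat v
  have rep : ∀ z ∈ Submodule.span R (Set.range hhat),
      z = ∑ v : V, i v z • hhat v := by
    intro z hz
    induction hz using Submodule.span_induction with
    | mem z hz =>
      obtain ⟨u, rfl⟩ := hz
      have : ∀ v : V, i v (hhat u) • hhat v = if v = u then hhat u else 0 := by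
        intro v
        rw [key u v]
        by_cases h : v = u
        · subst h; simp
        · simp [h]
      rw [Finset.sum_congr rfl fun v _ => this v, Finset.sum_ite_eq' _ u]
      simp
    | zero => simp
    | add a b _ _ ha hb =>
      simp only [map_add, add_smul, Finset.sum_add_distrib]
      rw [← ha, ← hb]
    | smul c a _ ha =>
      simp only [map_smul, smul_eq_mul, mul_smul]
      rw [← Finset.smul_sum, ← ha]
  have hm2 : m = ∑ v : V, hhat v := by
    have := rep m hm'
    simpa [hone, one_smul] using this
  -- compute the RHS
  have hxtop : x ⊤ = hhat ⊤ +
      ∑ w ∈ Finset.univ.filter (fun w => w < (⊤ : V)), i w (x ⊤) • hhat w := by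
    rw [hhat_rec ⊤]; abel
  rw [hm2]
  nth_rewrite 1 [hxtop]
  rw [add_assoc, ← Finset.sum_add_distrib]
  have : ∀ v : V, i v (x ⊤) • hhat v + (1 - i v (x ⊤)) • hhat v = hhat v := by
    intro v
    rw [← add_smul]
    simp
  rw [Finset.sum_congr rfl fun v _ => this v]
  have hfilter : Finset.univ.filter (fun v => v < (⊤ : V)) = Finset.univ.erase ⊤ := by
    ext v; simp [lt_top_iff_ne_top]
  rw [hfilter, Finset.add_sum_erase _ _ (Finset.mem_univ ⊤)]
end
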